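/- Let H0 and H1 be complex Hilbert spaces, let A0 on H0 and A1 on H1 be bounded operators, and let δ > 0. Assume: (a) for every bounded Y : H0 → H1 there exists a bounded X : H0 → H1 with X A0 − A1 X = Y; and (b) every bounded X : H0 → H1 satisfies δ·‖X‖ ≤ ‖X A0 − A1 X‖. Let B : H1 → H0 and C : H0 → H1 be bounded operators such that √(‖B‖·‖C‖) < δ/2. Then there exists a unique bounded operator K : H0 → H1 with 2·‖B‖·‖K‖ ≤ δ satisfying the Riccati equation K A0 − A1 K + K B K = C; moreover this K satisfies ‖K‖ ≤ ‖C‖ / (δ/2 + √(δ²/4 − ‖B‖·‖C‖)). (Bounded-operator version of Theorem 4.1 of the paper.) -/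

import Mathlib

/-!
The Sylvester operator `S X = X A0 - A1 X` is bijective with `‖S⁻¹‖ ≤ 1/δ`, so the Riccati
equation `S K + K B K = C` says that `K` is a fixed point of `K ↦ S⁻¹ (C - K B K)`. With
`ρ = ‖C‖ / (δ/2 + √(δ²/4 - ‖B‖‖C‖))`, the smaller root of `‖B‖ t² - δ t + ‖C‖`, this map sends
the closed ball of radius `ρ` into itself and is a contraction there with constant
`2‖B‖ρ/δ < 1`. Conversely a solution with `2‖B‖‖K‖ ≤ δ` satisfies
`δ‖K‖ ≤ ‖C‖ + ‖B‖‖K‖²`, which puts `‖K‖` below the smaller root, i.e. inside that ball.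
-/

open Set Metric ContinuousLinearMap

noncomputable def riccatiRadius (δ b c : ℝ) : ℝ :=
  c / (δ / 2 + √(δ ^ 2 / 4 - b * c))

section Radius

variable {δ b c : ℝ}

theorem riccatiRadius_nonneg (hδ : 0 < δ) (hc : 0 ≤ c) : 0 ≤ riccatiRadius δ b c :=
  div_nonneg hc (by positivity)

theorem mul_riccatiRadius (hδ : 0 < δ) (hbc : b * c ≤ δ ^ 2 / 4) :
    b * riccatiRadius δ b c = δ / 2 - √(δ ^ 2 / 4 - b * c) := by
  have hs := Real.sq_sqrt (sub_nonneg.mpr hbc)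
  have hden : 0 < δ / 2 + √(δ ^ 2 / 4 - b * c) := by positivity
  rw [riccatiRadius, mul_div_assoc', div_eq_iff hden.ne']
  linear_combination hs

theorem two_mul_mul_riccatiRadius_lt (hδ : 0 < δ) (hbc : b * c < δ ^ 2 / 4) :
    2 * b * riccatiRadius δ b c < δ := by
  have hs : 0 < √(δ ^ 2 / 4 - b * c) := Real.sqrt_pos.mpr (by linarith)
  linarith [mul_riccatiRadius hδ hbc.le]

theorem add_mul_riccatiRadius_sq (hδ : 0 < δ) (hbc : b * c ≤ δ ^ 2 / 4) :
    c + b * riccatiRadius δ b c ^ 2 = δ * riccatiRadius δ b c := by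
  have hden : 0 < δ / 2 + √(δ ^ 2 / 4 - b * c) := by positivity
  have hρ : riccatiRadius δ b c * (δ / 2 + √(δ ^ 2 / 4 - b * c)) = c :=
    div_mul_cancel₀ _ hden.ne'
  linear_combination -hρ + riccatiRadius δ b c * mul_riccatiRadius hδ hbc

theorem le_riccatiRadius (hδ : 0 < δ) (hbc : b * c < δ ^ 2 / 4) {t : ℝ}
    (ht : δ * t ≤ c + b * t ^ 2) (hbt : 2 * b * t ≤ δ) : t ≤ riccatiRadius δ b c := by
  set ρ := riccatiRadius δ b c
  have hρ := add_mul_riccatiRadius_sq hδ hbc.le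
  have hbρ := two_mul_mul_riccatiRadius_lt hδ hbc
  by_contra! hlt
  -- `(t - ρ) (δ - b (t + ρ)) = δ t - b t² - c`, where both factors on the left are positive.
  have hprod : 0 < (t - ρ) * (δ - b * (t + ρ)) := mul_pos (by linarith) (by linarith)
  nlinarith

end Radius

section FixedPoint

variable {E : Type*} [NormedAddCommGroup E] {S : E →+ E} {Q : E → E} {δ b : ℝ}

theorem mul_norm_le_of_map_add_eq (hS : ∀ x, δ * ‖x‖ ≤ ‖S x‖) (hQ0 : Q 0 = 0)
    (hQ : ∀ x y, ‖Q x - Q y‖ ≤ b * (‖x‖ + ‖y‖) * ‖x - y‖) {u x c : E} (h : S u + Q x = c) :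
    δ * ‖u‖ ≤ ‖c‖ + b * ‖x‖ ^ 2 := by
  have hQx : ‖Q x‖ ≤ b * ‖x‖ ^ 2 := by simpa [hQ0, sq, mul_assoc] using hQ x 0
  calc δ * ‖u‖ ≤ ‖S u‖ := hS u
    _ = ‖c - Q x‖ := by rw [← h, add_sub_cancel_right]
    _ ≤ ‖c‖ + b * ‖x‖ ^ 2 := (norm_sub_le _ _).trans (by gcongr)

theorem mul_norm_sub_le_of_map_add_eq (hS : ∀ x, δ * ‖x‖ ≤ ‖S x‖) (hb : 0 ≤ b)
    (hQ : ∀ x y, ‖Q x - Q y‖ ≤ b * (‖x‖ + ‖y‖) * ‖x - y‖) {r : ℝ} {x y u v : E}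
    (hx : ‖x‖ ≤ r) (hy : ‖y‖ ≤ r) (h : S u + Q x = S v + Q y) :
    δ * ‖u - v‖ ≤ 2 * b * r * ‖x - y‖ :=
  calc δ * ‖u - v‖ ≤ ‖S (u - v)‖ := hS _
    _ = ‖Q y - Q x‖ := by rw [map_sub, sub_eq_sub_iff_add_eq_add.mpr (h.trans (add_comm _ _))]
    _ = ‖Q x - Q y‖ := norm_sub_rev _ _
    _ ≤ b * (‖x‖ + ‖y‖) * ‖x - y‖ := hQ x y
    _ ≤ 2 * b * r * ‖x - y‖ := by
      have : b * (‖x‖ + ‖y‖) ≤ 2 * b * r := by nlinarith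
      gcongr

theorem exists_fixedPoint_of_lipschitzOnWith {α : Type*} [MetricSpace α] {s : Set α}
    (hsc : IsComplete s) (hs : s.Nonempty) {f : α → α} {K : NNReal} (hK : K < 1)
    (hsf : MapsTo f s s) (hf : LipschitzOnWith K f s) : ∃ x ∈ s, f x = x := by
  obtain ⟨x, hx⟩ := hs
  obtain ⟨y, hys, hy, -⟩ :=
    ContractingWith.exists_fixedPoint' hsc hsf ⟨hK, hf.mapsToRestrict hsf⟩ hx (edist_ne_top _ _)
  exact ⟨y, hys, hy⟩

theorem eq_of_map_add_eq_of_norm_le (hS : ∀ x, δ * ‖x‖ ≤ ‖S x‖) (hb : 0 ≤ b)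
    (hQ : ∀ x y, ‖Q x - Q y‖ ≤ b * (‖x‖ + ‖y‖) * ‖x - y‖) {r : ℝ} (hr : 2 * b * r < δ)
    {x y c : E} (hx : ‖x‖ ≤ r) (hy : ‖y‖ ≤ r) (hxc : S x + Q x = c) (hyc : S y + Q y = c) :
    x = y := by
  by_contra hne
  have hpos : 0 < ‖x - y‖ := norm_pos_iff.mpr (sub_ne_zero.mpr hne)
  exact (mul_lt_mul_of_pos_right hr hpos).not_ge
    (mul_norm_sub_le_of_map_add_eq hS hb hQ hx hy (hxc.trans hyc.symm))

variable (hS : ∀ x, δ * ‖x‖ ≤ ‖S x‖) (hQ0 : Q 0 = 0)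
  (hQ : ∀ x y, ‖Q x - Q y‖ ≤ b * (‖x‖ + ‖y‖) * ‖x - y‖)
  (hδ : 0 < δ) {c : E} (hbc : b * ‖c‖ < δ ^ 2 / 4)
include hS hQ0 hQ hδ hbc

theorem exists_norm_le_riccatiRadius_and_map_add_eq [CompleteSpace E]
    (hSsurj : Function.Surjective S) (hb : 0 ≤ b) :
    ∃ x, ‖x‖ ≤ riccatiRadius δ b ‖c‖ ∧ S x + Q x = c := by
  set ρ := riccatiRadius δ b ‖c‖
  have hρ : 0 ≤ ρ := riccatiRadius_nonneg hδ (norm_nonneg c)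
  set K : NNReal := ⟨2 * b * ρ / δ, by positivity⟩
  set Φ : E → E := fun x ↦ Function.surjInv hSsurj (c - Q x)
  have hΦ (x : E) : S (Φ x) + Q x = c := by
    rw [Function.surjInv_eq hSsurj, sub_add_cancel]
  have hmaps : MapsTo Φ (closedBall 0 ρ) (closedBall 0 ρ) := by
    intro x hx
    rw [mem_closedBall_zero_iff] at hx ⊢
    refine le_of_mul_le_mul_left ?_ hδ
    calc δ * ‖Φ x‖ ≤ ‖c‖ + b * ‖x‖ ^ 2 := mul_norm_le_of_map_add_eq hS hQ0 hQ (hΦ x)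
      _ ≤ ‖c‖ + b * ρ ^ 2 := by gcongr
      _ = δ * ρ := add_mul_riccatiRadius_sq hδ hbc.le
  have hlip : LipschitzOnWith K Φ (closedBall 0 ρ) := by
    refine LipschitzOnWith.of_dist_le_mul fun x hx y hy ↦ ?_
    rw [mem_closedBall_zero_iff] at hx hy
    rw [dist_eq_norm, dist_eq_norm]
    change _ ≤ 2 * b * ρ / δ * _
    rw [div_mul_eq_mul_div, le_div_iff₀ hδ, mul_comm]
    exact mul_norm_sub_le_of_map_add_eq hS hb hQ hx hy ((hΦ x).trans (hΦ y).symm)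
  have hK : K < 1 := by
    change 2 * b * ρ / δ < 1
    rw [div_lt_one hδ]
    exact two_mul_mul_riccatiRadius_lt hδ hbc
  obtain ⟨x, hx, hfix⟩ := exists_fixedPoint_of_lipschitzOnWith isClosed_closedBall.isComplete
    (nonempty_closedBall.mpr hρ) hK hmaps hlip
  refine ⟨x, mem_closedBall_zero_iff.mp hx, ?_⟩
  simpa only [hfix] using hΦ x

theorem norm_le_riccatiRadius_of_map_add_eq {x : E} (hx : 2 * b * ‖x‖ ≤ δ)
    (h : S x + Q x = c) : ‖x‖ ≤ riccatiRadius δ b ‖c‖ :=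
  le_riccatiRadius hδ hbc (mul_norm_le_of_map_add_eq hS hQ0 hQ h) hx

theorem existsUnique_map_add_eq [CompleteSpace E] (hSsurj : Function.Surjective S)
    (hb : 0 ≤ b) :
    (∃! x, 2 * b * ‖x‖ ≤ δ ∧ S x + Q x = c) ∧
      ∀ x, 2 * b * ‖x‖ ≤ δ → S x + Q x = c → ‖x‖ ≤ riccatiRadius δ b ‖c‖ := by
  obtain ⟨x, hxρ, hx⟩ :=
    exists_norm_le_riccatiRadius_and_map_add_eq hS hQ0 hQ hδ hbc hSsurj hb
  have hρ := two_mul_mul_riccatiRadius_lt hδ hbc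
  have hxδ : 2 * b * ‖x‖ ≤ δ := (by gcongr : 2 * b * ‖x‖ ≤ 2 * b * _).trans hρ.le
  refine ⟨⟨x, ⟨hxδ, hx⟩, fun y ⟨hyδ, hy⟩ ↦ ?_⟩,
    fun y ↦ norm_le_riccatiRadius_of_map_add_eq hS hQ0 hQ hδ hbc⟩
  exact eq_of_map_add_eq_of_norm_le hS hb hQ hρ
    (norm_le_riccatiRadius_of_map_add_eq hS hQ0 hQ hδ hbc hyδ hy) hxρ hy hx

end FixedPoint

section Operators

variable {𝕜 E F : Type*} [NontriviallyNormedField 𝕜] [SeminormedAddCommGroup E]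
  [NormedSpace 𝕜 E] [SeminormedAddCommGroup F] [NormedSpace 𝕜 F]

def sylvester (A0 : E →L[𝕜] E) (A1 : F →L[𝕜] F) : (E →L[𝕜] F) →+ (E →L[𝕜] F) where
  toFun X := X ∘L A0 - A1 ∘L X
  map_zero' := by simp
  map_add' X Y := by simp only [add_comp, comp_add]; abel

theorem norm_comp_comp_sub_comp_comp_le (B : F →L[𝕜] E) (X Y : E →L[𝕜] F) :
    ‖(X ∘L B) ∘L X - (Y ∘L B) ∘L Y‖ ≤ ‖B‖ * (‖X‖ + ‖Y‖) * ‖X - Y‖ := by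
  have hsplit : (X ∘L B) ∘L X - (Y ∘L B) ∘L Y = (X ∘L B) ∘L (X - Y) + ((X - Y) ∘L B) ∘L Y := by
    rw [comp_sub, sub_comp, sub_comp]; abel
  have hcomp (U V : E →L[𝕜] F) : ‖(U ∘L B) ∘L V‖ ≤ ‖U‖ * ‖B‖ * ‖V‖ :=
    (opNorm_comp_le _ _).trans (by gcongr; exact opNorm_comp_le _ _)
  calc ‖(X ∘L B) ∘L X - (Y ∘L B) ∘L Y‖
      ≤ ‖X‖ * ‖B‖ * ‖X - Y‖ + ‖X - Y‖ * ‖B‖ * ‖Y‖ :=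
        hsplit ▸ (norm_add_le _ _).trans (add_le_add (hcomp _ _) (hcomp _ _))
    _ = ‖B‖ * (‖X‖ + ‖Y‖) * ‖X - Y‖ := by ring

end Operators

theorem riccati_existsUnique_of_sylvester_bound_general
    {H0 : Type*} [NormedAddCommGroup H0] [InnerProductSpace ℂ H0]
    {H1 : Type*} [NormedAddCommGroup H1] [InnerProductSpace ℂ H1] [CompleteSpace H1]
    (A0 : H0 →L[ℂ] H0) (A1 : H1 →L[ℂ] H1) (δ : ℝ)
    (hSurj : ∀ Y : H0 →L[ℂ] H1, ∃ X : H0 →L[ℂ] H1, X ∘L A0 - A1 ∘L X = Y)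
    (hBound : ∀ X : H0 →L[ℂ] H1, δ * ‖X‖ ≤ ‖X ∘L A0 - A1 ∘L X‖)
    (B : H1 →L[ℂ] H0) (C : H0 →L[ℂ] H1)
    (hBC : Real.sqrt (‖B‖ * ‖C‖) < δ / 2) :
    (∃! K : H0 →L[ℂ] H1,
        2 * ‖B‖ * ‖K‖ ≤ δ ∧ K ∘L A0 - A1 ∘L K + (K ∘L B) ∘L K = C) ∧
      ∀ K : H0 →L[ℂ] H1,
        2 * ‖B‖ * ‖K‖ ≤ δ → K ∘L A0 - A1 ∘L K + (K ∘L B) ∘L K = C →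
          ‖K‖ ≤ ‖C‖ / (δ / 2 + Real.sqrt (δ ^ 2 / 4 - ‖B‖ * ‖C‖)) := by
  have hδ : 0 < δ := by linarith [Real.sqrt_nonneg (‖B‖ * ‖C‖)]
  have hbc : ‖B‖ * ‖C‖ < δ ^ 2 / 4 := by
    linear_combination (Real.sqrt_lt' (by positivity)).mp hBC
  exact existsUnique_map_add_eq (S := sylvester A0 A1) (Q := fun K ↦ (K ∘L B) ∘L K) hBound
    (by simp) (norm_comp_comp_sub_comp_comp_le B) hδ hbc hSurj (norm_nonneg B)

/-- Bounded-operator version of Theorem 4.1 of the paper: if the Sylvester operator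
`X ↦ X A0 - A1 X` is surjective and bounded below by `δ > 0`, and
`√(‖B‖·‖C‖) < δ/2`, then the Riccati equation `K A0 - A1 K + K B K = C` has a unique
bounded solution `K` with `2‖B‖‖K‖ ≤ δ`; moreover this solution satisfies
`‖K‖ ≤ ‖C‖ / (δ/2 + √(δ²/4 - ‖B‖‖C‖))`. -/
theorem riccati_existsUnique_of_sylvester_bound
    {H0 : Type*} [NormedAddCommGroup H0] [InnerProductSpace ℂ H0] [CompleteSpace H0]
    {H1 : Type*} [NormedAddCommGroup H1] [InnerProductSpace ℂ H1] [CompleteSpace H1]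
    (A0 : H0 →L[ℂ] H0) (A1 : H1 →L[ℂ] H1) (δ : ℝ) (hδ : 0 < δ)
    (hSurj : ∀ Y : H0 →L[ℂ] H1, ∃ X : H0 →L[ℂ] H1, X ∘L A0 - A1 ∘L X = Y)
    (hBound : ∀ X : H0 →L[ℂ] H1, δ * ‖X‖ ≤ ‖X ∘L A0 - A1 ∘L X‖)
    (B : H1 →L[ℂ] H0) (C : H0 →L[ℂ] H1)
    (hBC : Real.sqrt (‖B‖ * ‖C‖) < δ / 2) :
    (∃! K : H0 →L[ℂ] H1,
        2 * ‖B‖ * ‖K‖ ≤ δ ∧ K ∘L A0 - A1 ∘L K + (K ∘L B) ∘L K = C) ∧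
      ∀ K : H0 →L[ℂ] H1,
        2 * ‖B‖ * ‖K‖ ≤ δ → K ∘L A0 - A1 ∘L K + (K ∘L B) ∘L K = C →
          ‖K‖ ≤ ‖C‖ / (δ / 2 + Real.sqrt (δ ^ 2 / 4 - ‖B‖ * ‖C‖)) :=
  riccati_existsUnique_of_sylvester_bound_general A0 A1 δ hSurj hBound B C hBC
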